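/- Suppose z* ∈ ℝ^N maximizes f(z) = min_{(a,b)∈A} ρ(z, a, b) over ℝ^N, and let (a*, b*) ∈ A attain the inner minimum at z*. Then f(z*) < z*_n for every n, and G^n(Y^n|z*_n, a^{n*}, b^{n*}) = ĝ_n(z*_n) for every n = 1,…,N (i.e., at a robust optimum the adversary forces every partition component to its minimum value). -/

import Mathlib

/-- `G^n(Y^n | z, a^n, b^n) = G^n((exp(a_i − b_i (z + c_i)))_{i ∈ V_n})` where the
partition `V_n = {i | part i = n}`. -/
noncomputable def GzP (m N : ℕ) (part : Fin m → Fin N)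
    (Gn : ∀ n : Fin N, ({i : Fin m // part i = n} → ℝ) → ℝ)
    (c : Fin m → ℝ) (n : Fin N) (z : ℝ)
    (ab : ({i : Fin m // part i = n} → ℝ) × ({i : Fin m // part i = n} → ℝ)) : ℝ :=
  Gn n fun i => Real.exp (ab.1 i - ab.2 i * (z + c i.1))

/-- `ĝ_n(z) = min_{(a^n, b^n) ∈ A^n} G^n(Y^n | z, a^n, b^n)`. -/
noncomputable def ghatP (m N : ℕ) (part : Fin m → Fin N)
    (Gn : ∀ n : Fin N, ({i : Fin m // part i = n} → ℝ) → ℝ)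
    (c : Fin m → ℝ)
    (An : ∀ n : Fin N,
      Set (({i : Fin m // part i = n} → ℝ) × ({i : Fin m // part i = n} → ℝ)))
    (n : Fin N) (z : ℝ) : ℝ :=
  sInf (GzP m N part Gn c n z '' An n)

/-- `ρ(z, a, b)` for a full parameter profile `ab = ((a^n, b^n))_n`. -/
noncomputable def rhoP (m N : ℕ) (part : Fin m → Fin N)
    (Gn : ∀ n : Fin N, ({i : Fin m // part i = n} → ℝ) → ℝ)
    (c : Fin m → ℝ) (z : Fin N → ℝ)
    (ab : ∀ n : Fin N,
      ({i : Fin m // part i = n} → ℝ) × ({i : Fin m // part i = n} → ℝ)) : ℝ :=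
  (∑ n, z n * GzP m N part Gn c n (z n) (ab n)) /
    (1 + ∑ n, GzP m N part Gn c n (z n) (ab n))

/-- The full uncertainty set `A = A^1 × ⋯ × A^N` as a set of parameter profiles. -/
def AllP (m N : ℕ) (part : Fin m → Fin N)
    (An : ∀ n : Fin N,
      Set (({i : Fin m // part i = n} → ℝ) × ({i : Fin m // part i = n} → ℝ))) :
    Set (∀ n : Fin N,
      ({i : Fin m // part i = n} → ℝ) × ({i : Fin m // part i = n} → ℝ)) :=
  {ab | ∀ n, ab n ∈ An n}

/-- Robust objective `f(z) = min_{(a,b) ∈ A} ρ(z, a, b)`. -/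
noncomputable def fP (m N : ℕ) (part : Fin m → Fin N)
    (Gn : ∀ n : Fin N, ({i : Fin m // part i = n} → ℝ) → ℝ)
    (c : Fin m → ℝ)
    (An : ∀ n : Fin N,
      Set (({i : Fin m // part i = n} → ℝ) × ({i : Fin m // part i = n} → ℝ)))
    (z : Fin N → ℝ) : ℝ :=
  sInf (rhoP m N part Gn c z '' AllP m N part An)


open Real Set

lemma aux_Gpos {ι : Type*} [Fintype ι] [Nonempty ι] [DecidableEq ι] (G : (ι → ℝ) → ℝ)
    (hsm : ContDiffOn ℝ 2 G {Y : ι → ℝ | ∀ i, 0 < Y i})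
    (hhom : ∀ lam : ℝ, 0 < lam → ∀ Y : ι → ℝ, (∀ i, 0 < Y i) → G (lam • Y) = lam * G Y)
    (hd1 : ∀ Y : ι → ℝ, (∀ i, 0 < Y i) → ∀ i, 0 < fderiv ℝ G Y (Pi.single i 1))
    (Y : ι → ℝ) (hY : ∀ i, 0 < Y i) : 0 < G Y := by
  have hopen : IsOpen {Y : ι → ℝ | ∀ i, 0 < Y i} := by
    have h : {Y : ι → ℝ | ∀ i, 0 < Y i} = Set.pi Set.univ fun _ => Set.Ioi (0:ℝ) := by
      ext W; simp [Set.mem_pi]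
    rw [h]; exact isOpen_set_pi Set.finite_univ fun _ _ => isOpen_Ioi
  have hdiff : ∀ W : ι → ℝ, (∀ i, 0 < W i) → DifferentiableAt ℝ G W := fun W hW =>
    (hsm.differentiableOn (by norm_num)).differentiableAt (hopen.mem_nhds hW)
  have key : ∀ W : ι → ℝ, (∀ i, 0 < W i) → 0 < fderiv ℝ G W Y := by
    intro W hW
    have hrepr : Y = ∑ i, Y i • (Pi.single i (1:ℝ) : ι → ℝ) := by
      funext j
      simp [Finset.sum_apply, Pi.single_apply]
    have : fderiv ℝ G W Y = ∑ i, Y i * fderiv ℝ G W (Pi.single i 1) := by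
      conv_lhs => rw [hrepr]
      rw [map_sum]
      exact Finset.sum_congr rfl fun i _ => by rw [map_smul]; rfl
    rw [this]
    exact Finset.sum_pos (fun i _ => mul_pos (hY i) (hd1 W hW i)) Finset.univ_nonempty
  set h : ℝ → ℝ := fun t => G ((1+t) • Y) with hh
  have hWt : ∀ t : ℝ, 0 ≤ t → ∀ i, 0 < ((1+t) • Y) i := by
    intro t ht i
    have : 0 < 1 + t := by linarith
    simpa using mul_pos this (hY i)
  have hD : ∀ t : ℝ, 0 ≤ t → HasDerivAt h (fderiv ℝ G ((1+t) • Y) Y) t := by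
    intro t ht
    have h1 : HasDerivAt (fun s : ℝ => (1+s) • Y) Y t := by
      simpa using ((hasDerivAt_id t).const_add (1:ℝ)).smul_const Y
    exact ((hdiff _ (hWt t ht)).hasFDerivAt.comp_hasDerivAt t h1)
  have hmono : StrictMonoOn h (Set.Icc 0 1) := by
    apply strictMonoOn_of_deriv_pos (convex_Icc 0 1)
    · exact fun t ht => (hD t ht.1).continuousAt.continuousWithinAt
    · intro t ht
      rw [interior_Icc] at ht
      rw [(hD t ht.1.le).deriv]
      exact key _ (hWt t ht.1.le)
  have h01 : h 0 < h 1 := hmono (by norm_num) (by norm_num) zero_lt_one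
  have e0 : h 0 = G Y := by norm_num [hh]
  have e1 : h 1 = 2 * G Y := by
    have := hhom 2 (by norm_num) Y hY
    norm_num [hh, this]
  rw [e0, e1] at h01
  linarith

/-- At a robust optimum `z*`, with `(a*, b*)` attaining the inner
minimum, one has `f(z*) < z*_n` and the adversary forces every partition
component to its minimum: `G^n(Y^n|z*_n, a^{n*}, b^{n*}) = ĝ_n(z*_n)`. -/
theorem stmt_15
    (m N : ℕ) (hN : 1 ≤ N)
    (part : Fin m → Fin N) (hpart : ∀ n : Fin N, ∃ i, part i = n)
    (Gn : ∀ n : Fin N, ({i : Fin m // part i = n} → ℝ) → ℝ)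
    (hGnonneg : ∀ n, ∀ Y : {i : Fin m // part i = n} → ℝ,
      (∀ i, 0 < Y i) → 0 ≤ Gn n Y)
    (hGsmooth : ∀ n, ContDiffOn ℝ 2 (Gn n)
      {Y : {i : Fin m // part i = n} → ℝ | ∀ i, 0 < Y i})
    (hGhom : ∀ n, ∀ lam : ℝ, 0 < lam → ∀ Y : {i : Fin m // part i = n} → ℝ,
      (∀ i, 0 < Y i) → Gn n (lam • Y) = lam * Gn n Y)
    (hGd1 : ∀ n, ∀ Y : {i : Fin m // part i = n} → ℝ, (∀ i, 0 < Y i) →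
      ∀ i, 0 < fderiv ℝ (Gn n) Y (Pi.single i 1))
    (hGd2 : ∀ n, ∀ Y : {i : Fin m // part i = n} → ℝ, (∀ i, 0 < Y i) →
      ∀ i j, i ≠ j →
        fderiv ℝ (fun W => fderiv ℝ (Gn n) W (Pi.single i 1)) Y (Pi.single j 1) ≤ 0)
    (An : ∀ n : Fin N,
      Set (({i : Fin m // part i = n} → ℝ) × ({i : Fin m // part i = n} → ℝ)))
    (hAne : ∀ n, (An n).Nonempty) (hAconv : ∀ n, Convex ℝ (An n))
    (hAcomp : ∀ n, IsCompact (An n))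
    (hAb : ∀ n, ∀ ab ∈ An n, ∃ β : ℝ, 0 < β ∧ ∀ i, ab.2 i = β)
    (c : Fin m → ℝ) (hc : ∀ i, 0 ≤ c i)
    (zs : Fin N → ℝ)
    (hzs : ∀ z : Fin N → ℝ, fP m N part Gn c An z ≤ fP m N part Gn c An zs)
    (abs : ∀ n : Fin N,
      ({i : Fin m // part i = n} → ℝ) × ({i : Fin m // part i = n} → ℝ))
    (habsA : abs ∈ AllP m N part An)
    (habsmin : ∀ ab ∈ AllP m N part An,
      rhoP m N part Gn c zs abs ≤ rhoP m N part Gn c zs ab) :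
    ∀ n : Fin N,
      fP m N part Gn c An zs < zs n ∧
      GzP m N part Gn c n (zs n) (abs n) = ghatP m N part Gn c An n (zs n) := by
  classical
  -- positivity of GzP
  have hGzpos : ∀ (k : Fin N) (z : ℝ) ab, 0 < GzP m N part Gn c k z ab := by
    intro k z ab
    have : Nonempty {i : Fin m // part i = k} :=
      ⟨⟨(hpart k).choose, (hpart k).choose_spec⟩⟩
    exact aux_Gpos (Gn k) (hGsmooth k) (hGhom k) (hGd1 k) _ (fun i => Real.exp_pos _)
  have hGznn : ∀ (k : Fin N) (z : ℝ) ab, 0 ≤ GzP m N part Gn c k z ab :=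
    fun k z ab => (hGzpos k z ab).le
  -- continuity of GzP in ab
  have hcontG : ∀ (k : Fin N) (z : ℝ), Continuous (GzP m N part Gn c k z) := by
    intro k z
    have hco : ContinuousOn (Gn k) {Y : {i : Fin m // part i = k} → ℝ | ∀ i, 0 < Y i} :=
      (hGsmooth k).continuousOn
    have hin : Continuous (fun ab : ({i : Fin m // part i = k} → ℝ) × ({i : Fin m // part i = k} → ℝ) =>
        fun i => Real.exp (ab.1 i - ab.2 i * (z + c i.1))) := by
      apply continuous_pi; intro i
      exact Real.continuous_exp.comp
        (((continuous_apply i).comp continuous_fst).sub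
          (((continuous_apply i).comp continuous_snd).mul continuous_const))
    exact hco.comp_continuous hin (fun ab i => Real.exp_pos _)
  -- denominators
  have hden : ∀ (z : Fin N → ℝ) (ab : ∀ n : Fin N, ({i : Fin m // part i = n} → ℝ) × ({i : Fin m // part i = n} → ℝ)), 0 < 1 + ∑ k, GzP m N part Gn c k (z k) (ab k) := by
    intro z ab
    have : 0 ≤ ∑ k, GzP m N part Gn c k (z k) (ab k) :=
      Finset.sum_nonneg fun k _ => hGznn k (z k) (ab k)
    linarith
  -- continuity of rho in ab
  have hcontrho : ∀ z : Fin N → ℝ, Continuous (rhoP m N part Gn c z) := by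
    intro z
    apply Continuous.div
    · exact continuous_finset_sum _ fun k _ =>
        continuous_const.mul ((hcontG k (z k)).comp (continuous_apply k))
    · exact continuous_const.add (continuous_finset_sum _ fun k _ =>
        (hcontG k (z k)).comp (continuous_apply k))
    · exact fun ab => (hden z ab).ne'
  -- compactness / nonemptiness of AllP
  have hAlleq : AllP m N part An = Set.univ.pi An := by
    ext ab; simp [AllP, Set.mem_pi]
  have hAllcomp : IsCompact (AllP m N part An) := by
    rw [hAlleq]; exact isCompact_univ_pi hAcomp
  have hAllne : (AllP m N part An).Nonempty := ⟨abs, habsA⟩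
  -- f(zs) = rho(zs, abs)
  have hfzs : fP m N part Gn c An zs = rhoP m N part Gn c zs abs := by
    apply IsLeast.csInf_eq
    exact ⟨Set.mem_image_of_mem _ habsA, by rintro x ⟨ab, hab, rfl⟩; exact habsmin ab hab⟩
  -- shift lemma
  have hshift : ∀ (k : Fin N) (z ε β : ℝ), ∀ ab : ({i : Fin m // part i = k} → ℝ) × ({i : Fin m // part i = k} → ℝ), (∀ i, ab.2 i = β) →
      GzP m N part Gn c k (z + ε) ab = Real.exp (-(β*ε)) * GzP m N part Gn c k z ab := by
    intro k z ε β ab hab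
    have h1 : (fun i : {i : Fin m // part i = k} => Real.exp (ab.1 i - ab.2 i * (z + ε + c i.1)))
        = Real.exp (-(β*ε)) • (fun i => Real.exp (ab.1 i - ab.2 i * (z + c i.1))) := by
      funext i
      simp only [Pi.smul_apply, smul_eq_mul, hab i, ← Real.exp_add]
      congr 1; ring
    show Gn k _ = _
    rw [h1, hGhom k _ (Real.exp_pos _) _ (fun i => Real.exp_pos _)]
    rfl
  -- Part 1
  have part1 : ∀ n : Fin N, rhoP m N part Gn c zs abs < zs n := by
    intro n
    by_contra hle
    push_neg at hle
    set z' := Function.update zs n (zs n + 1) with hz'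
    obtain ⟨ab', hab'A, hab'min⟩ := hAllcomp.exists_isMinOn hAllne ((hcontrho z').continuousOn)
    have hfz' : fP m N part Gn c An z' = rhoP m N part Gn c z' ab' := by
      apply IsLeast.csInf_eq
      exact ⟨Set.mem_image_of_mem _ hab'A, by rintro x ⟨ab, hab, rfl⟩; exact hab'min hab⟩
    obtain ⟨β, hβpos, hβ⟩ := hAb n (ab' n) (hab'A n)
    set g := GzP m N part Gn c n (zs n) (ab' n) with hgdef
    set g' := GzP m N part Gn c n (zs n + 1) (ab' n) with hg'def
    have hgpos : 0 < g := hGzpos n (zs n) (ab' n)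
    have hg'pos : 0 < g' := hGzpos n (zs n + 1) (ab' n)
    have hg'g : g' < g := by
      have := hshift n (zs n) 1 β (ab' n) hβ
      rw [hg'def, this]
      have hlt : Real.exp (-(β*1)) < 1 := by
        rw [Real.exp_lt_one_iff]; nlinarith
      nlinarith
    set S := ∑ k ∈ Finset.univ.erase n, zs k * GzP m N part Gn c k (zs k) (ab' k) with hSdef
    set T := ∑ k ∈ Finset.univ.erase n, GzP m N part Gn c k (zs k) (ab' k) with hTdef
    have hT : 0 ≤ T := Finset.sum_nonneg fun k _ => hGznn k (zs k) (ab' k)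
    have hrho1 : rhoP m N part Gn c zs ab' = (S + zs n * g) / (1 + T + g) := by
      have e1 : ∑ k, zs k * GzP m N part Gn c k (zs k) (ab' k)
          = zs n * g + S := (Finset.add_sum_erase _ _ (Finset.mem_univ n)).symm
      have e2 : ∑ k, GzP m N part Gn c k (zs k) (ab' k)
          = g + T := (Finset.add_sum_erase _ _ (Finset.mem_univ n)).symm
      rw [rhoP, e1, e2]; ring_nf
    have hrho2 : rhoP m N part Gn c z' ab' = (S + (zs n + 1) * g') / (1 + T + g') := by
      have e1 : ∑ k, z' k * GzP m N part Gn c k (z' k) (ab' k)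
          = (zs n + 1) * g' + S := by
        rw [← Finset.add_sum_erase _ _ (Finset.mem_univ n)]
        congr 1
        · rw [hz']; rw [Function.update_self]
        · exact Finset.sum_congr rfl fun k hk => by
            rw [hz', Function.update_of_ne (Finset.ne_of_mem_erase hk)]
      have e2 : ∑ k, GzP m N part Gn c k (z' k) (ab' k)
          = g' + T := by
        rw [← Finset.add_sum_erase _ _ (Finset.mem_univ n)]
        congr 1
        · rw [hz']; rw [Function.update_self]
        · exact Finset.sum_congr rfl fun k hk => by
            rw [hz', Function.update_of_ne (Finset.ne_of_mem_erase hk)]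
      rw [rhoP, e1, e2]; ring_nf
    clear_value g g' S T
    have hB1 : 0 < 1 + T + g := by linarith
    have hB2 : 0 < 1 + T + g' := by linarith
    have hle2 : zs n ≤ (S + zs n * g) / (1 + T + g) := by
      rw [← hrho1]; exact le_trans hle (habsmin ab' hab'A)
    have hzle : zs n * (1 + T) ≤ S := by
      rw [le_div_iff₀ hB1] at hle2; nlinarith
    have hkey : (S + zs n * g) / (1 + T + g) < (S + (zs n + 1) * g') / (1 + T + g') := by
      rw [div_lt_div_iff₀ hB1 hB2]
      nlinarith [mul_nonneg (sub_nonneg.2 hzle) (sub_nonneg.2 hg'g.le),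
        mul_pos hg'pos hB1]
    have hlt : rhoP m N part Gn c zs abs < rhoP m N part Gn c z' ab' := by
      calc rhoP m N part Gn c zs abs ≤ rhoP m N part Gn c zs ab' := habsmin ab' hab'A
        _ = (S + zs n * g) / (1 + T + g) := hrho1
        _ < (S + (zs n + 1) * g') / (1 + T + g') := hkey
        _ = rhoP m N part Gn c z' ab' := hrho2.symm
    have := hzs z'
    rw [hfz', hfzs] at this
    linarith
  -- Part 2
  intro n
  refine ⟨by rw [hfzs]; exact part1 n, ?_⟩
  obtain ⟨abn, habnA, habnmin⟩ :=
    (hAcomp n).exists_isMinOn (hAne n) ((hcontG n (zs n)).continuousOn)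
  have hghat : ghatP m N part Gn c An n (zs n) = GzP m N part Gn c n (zs n) abn := by
    apply IsLeast.csInf_eq
    exact ⟨Set.mem_image_of_mem _ habnA, by rintro x ⟨ab, hab, rfl⟩; exact habnmin hab⟩
  set t := GzP m N part Gn c n (zs n) (abs n) with htdef
  set t' := GzP m N part Gn c n (zs n) abn with ht'def
  have htle : t' ≤ t := habnmin (habsA n)
  rcases eq_or_lt_of_le htle with heq | hltt
  · rw [hghat]; exact heq.symm
  · exfalso
    set ab'' := Function.update abs n abn with hab''
    have hab''A : ab'' ∈ AllP m N part An := by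
      intro k
      by_cases hk : k = n
      · subst hk; rw [hab'', Function.update_self]; exact habnA
      · rw [hab'', Function.update_of_ne hk]; exact habsA k
    set S := ∑ k ∈ Finset.univ.erase n, zs k * GzP m N part Gn c k (zs k) (abs k) with hSdef
    set T := ∑ k ∈ Finset.univ.erase n, GzP m N part Gn c k (zs k) (abs k) with hTdef
    have hT : 0 ≤ T := Finset.sum_nonneg fun k _ => hGznn k (zs k) (abs k)
    have ht'pos : 0 < t' := hGzpos n (zs n) abn
    have hrho1 : rhoP m N part Gn c zs abs = (S + zs n * t) / (1 + T + t) := by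
      have e1 : ∑ k, zs k * GzP m N part Gn c k (zs k) (abs k)
          = zs n * t + S := (Finset.add_sum_erase _ _ (Finset.mem_univ n)).symm
      have e2 : ∑ k, GzP m N part Gn c k (zs k) (abs k)
          = t + T := (Finset.add_sum_erase _ _ (Finset.mem_univ n)).symm
      rw [rhoP, e1, e2]; ring_nf
    have hrho2 : rhoP m N part Gn c zs ab'' = (S + zs n * t') / (1 + T + t') := by
      have e1 : ∑ k, zs k * GzP m N part Gn c k (zs k) (ab'' k)
          = zs n * t' + S := by
        rw [← Finset.add_sum_erase _ _ (Finset.mem_univ n)]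
        congr 1
        · rw [hab'', Function.update_self]
        · exact Finset.sum_congr rfl fun k hk => by
            rw [hab'', Function.update_of_ne (Finset.ne_of_mem_erase hk)]
      have e2 : ∑ k, GzP m N part Gn c k (zs k) (ab'' k)
          = t' + T := by
        rw [← Finset.add_sum_erase _ _ (Finset.mem_univ n)]
        congr 1
        · rw [hab'', Function.update_self]
        · exact Finset.sum_congr rfl fun k hk => by
            rw [hab'', Function.update_of_ne (Finset.ne_of_mem_erase hk)]
      rw [rhoP, e1, e2]; ring_nf
    have htpos : 0 < t := hGzpos n (zs n) (abs n)
    clear_value t t' S T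
    have hB1 : 0 < 1 + T + t := by linarith
    have hB2 : 0 < 1 + T + t' := by linarith
    have hzgt : (S + zs n * t) / (1 + T + t) < zs n := by
      rw [← hrho1]; exact part1 n
    have hS : S < zs n * (1 + T) := by
      rw [div_lt_iff₀ hB1] at hzgt; nlinarith
    have hkey : (S + zs n * t') / (1 + T + t') < (S + zs n * t) / (1 + T + t) := by
      rw [div_lt_div_iff₀ hB2 hB1]
      nlinarith [mul_pos (sub_pos.2 hltt) (sub_pos.2 hS)]
    have hcontra := habsmin ab'' hab''A
    rw [hrho1, hrho2] at hcontra
    exact lt_irrefl _ (lt_of_le_of_lt hcontra hkey)
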